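/- arXiv:1511.02180 — 9 statements merged into one kernel-verified Lean document; each statement's English description precedes it below -/
import Mathlib

section
/- For any R, R_c ∈ SO(3), the attitude error vector e_R = (1/2)(R_cᵀR − RᵀR_c)^∨ satisfies ‖e_R‖² = Ψ(R,R_c)·(2 − Ψ(R,R_c)); in particular ‖e_R‖ ≤ 1, and if Ψ(R,R_c) ≤ ψ₁ for some constant 0 ≤ ψ₁ ≤ 1, then ‖e_R‖ ≤ √(ψ₁(2 − ψ₁)). -/
open Matrix

noncomputable section

/-- `SO(3)`: real 3×3 matrices with `RᵀR = I` and `det R = 1`. -/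
def SO3 (R : Matrix (Fin 3) (Fin 3) ℝ) : Prop := Rᵀ * R = 1 ∧ R.det = 1

/-- Configuration error function `Ψ(R, R_c) = (1/2)·tr(I₃ − R_cᵀR)`. -/
def Psi (R Rc : Matrix (Fin 3) (Fin 3) ℝ) : ℝ :=
  (1 / 2) * Matrix.trace ((1 : Matrix (Fin 3) (Fin 3) ℝ) - Rcᵀ * R)

/-- The vee map, inverse of the hat map, on skew-symmetric 3×3 matrices. -/
def vee (S : Matrix (Fin 3) (Fin 3) ℝ) : Fin 3 → ℝ := ![S 2 1, S 0 2, S 1 0]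

/-- The attitude error vector `e_R = (1/2)(R_cᵀR − RᵀR_c)^∨`. -/
def eR (R Rc : Matrix (Fin 3) (Fin 3) ℝ) : Fin 3 → ℝ :=
  (1 / 2 : ℝ) • vee (Rcᵀ * R - Rᵀ * Rc)

/-- The Euclidean norm on `ℝ³`. -/
def enorm3 (v : Fin 3 → ℝ) : ℝ := Real.sqrt (v ⬝ᵥ v)

lemma so3_key (Q : Matrix (Fin 3) (Fin 3) ℝ) (h1 : Qᵀ * Q = 1) (h2 : Q * Qᵀ = 1)
    (hd : Q.det = 1) :
    (Q 2 1 - Q 1 2) ^ 2 + (Q 0 2 - Q 2 0) ^ 2 + (Q 1 0 - Q 0 1) ^ 2 =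
      (3 - (Q 0 0 + Q 1 1 + Q 2 2)) * (1 + (Q 0 0 + Q 1 1 + Q 2 2)) := by
  have hadj : Matrix.adjugate Q = Qᵀ := by
    calc Matrix.adjugate Q = Matrix.adjugate Q * (Q * Qᵀ) := by rw [h2, mul_one]
      _ = (Matrix.adjugate Q * Q) * Qᵀ := by rw [mul_assoc]
      _ = Qᵀ := by rw [Matrix.adjugate_mul, hd, one_smul, one_mul]
  have a0 := congrFun (congrFun hadj 0) 0
  have a1 := congrFun (congrFun hadj 1) 1
  have a2 := congrFun (congrFun hadj 2) 2
  simp [Matrix.adjugate_fin_three, Matrix.transpose_apply] at a0 a1 a2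
  have c0 := congrFun (congrFun h1 0) 0
  have c1 := congrFun (congrFun h1 1) 1
  have c2 := congrFun (congrFun h1 2) 2
  simp [Matrix.mul_apply, Fin.sum_univ_three, Matrix.one_apply, Matrix.transpose_apply]
    at c0 c1 c2
  nlinarith [a0, a1, a2, c0, c1, c2]

theorem eR_norm_sq_eq_psi_mul_two_sub_psi
    (R Rc : Matrix (Fin 3) (Fin 3) ℝ) (hR : SO3 R) (hRc : SO3 Rc) :
    enorm3 (eR R Rc) ^ 2 = Psi R Rc * (2 - Psi R Rc) ∧
    enorm3 (eR R Rc) ≤ 1 ∧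
    ∀ ψ₁ : ℝ, 0 ≤ ψ₁ → ψ₁ ≤ 1 → Psi R Rc ≤ ψ₁ →
      enorm3 (eR R Rc) ≤ Real.sqrt (ψ₁ * (2 - ψ₁)) := by
  obtain ⟨hR1, hRd⟩ := hR
  obtain ⟨hRc1, hRcd⟩ := hRc
  set Q := Rcᵀ * R with hQ
  have hR2 : R * Rᵀ = 1 := mul_eq_one_comm.mp hR1
  have hRc2 : Rc * Rcᵀ = 1 := mul_eq_one_comm.mp hRc1
  have hQT : Qᵀ = Rᵀ * Rc := by rw [hQ, Matrix.transpose_mul, Matrix.transpose_transpose]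
  have h1 : Qᵀ * Q = 1 := by
    rw [hQT, hQ, mul_assoc, ← mul_assoc Rc, hRc2, one_mul, hR1]
  have h2 : Q * Qᵀ = 1 := by
    rw [hQT, hQ, mul_assoc, ← mul_assoc R, hR2, one_mul, hRc1]
  have hd : Q.det = 1 := by
    rw [hQ, Matrix.det_mul, Matrix.det_transpose, hRcd, hRd, one_mul]
  have key := so3_key Q h1 h2 hd
  have hPsi : Psi R Rc = (1 / 2) * (3 - (Q 0 0 + Q 1 1 + Q 2 2)) := by
    simp [Psi, hQ, Matrix.trace, Matrix.diag, Fin.sum_univ_three, Matrix.one_apply]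
  have hdot : eR R Rc ⬝ᵥ eR R Rc = Psi R Rc * (2 - Psi R Rc) := by
    simp only [eR, ← hQ, ← hQT, vee, dotProduct, Fin.sum_univ_three]
    simp [Matrix.sub_apply, hPsi]
    linear_combination (1/4 : ℝ) * key
  have hdotnn : (0 : ℝ) ≤ eR R Rc ⬝ᵥ eR R Rc := by
    simp [dotProduct, Fin.sum_univ_three]
    nlinarith [mul_self_nonneg (eR R Rc 0), mul_self_nonneg (eR R Rc 1), mul_self_nonneg (eR R Rc 2)]
  have hsq : enorm3 (eR R Rc) ^ 2 = Psi R Rc * (2 - Psi R Rc) := by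
    rw [enorm3, Real.sq_sqrt hdotnn, hdot]
  have hnn : 0 ≤ enorm3 (eR R Rc) := Real.sqrt_nonneg _
  refine ⟨hsq, ?_, ?_⟩
  · nlinarith [hsq, hnn, sq_nonneg (1 - Psi R Rc)]
  · intro ψ₁ h0 h1' hle
    have hmono : Psi R Rc * (2 - Psi R Rc) ≤ ψ₁ * (2 - ψ₁) := by nlinarith
    have : enorm3 (eR R Rc) = Real.sqrt (Psi R Rc * (2 - Psi R Rc)) := by
      rw [enorm3, hdot]
    rw [this]
    exact Real.sqrt_le_sqrt hmono
end
end

section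
/- For any R, R_c ∈ SO(3), the attitude error vector e_R = (1/2)(R_cᵀR − RᵀR_c)^∨ satisfies (1/2)‖e_R‖² ≤ Ψ(R, R_c). -/
open Matrix

noncomputable section

theorem eR_norm_sq_le_two_psi
    (R Rc : Matrix (Fin 3) (Fin 3) ℝ) (hR : SO3 R) (hRc : SO3 Rc) :
    (1 / 2) * enorm3 (eR R Rc) ^ 2 ≤ Psi R Rc := by
  obtain ⟨hR1, hR2⟩ := hR
  obtain ⟨hRc1, hRc2⟩ := hRc
  set Q := Rcᵀ * R with hQdef
  have hQ : Qᵀ * Q = 1 := by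
    have h1 : Rc * Rcᵀ = 1 := mul_eq_one_comm.mp hRc1
    calc Qᵀ * Q = Rᵀ * (Rc * Rcᵀ) * R := by
          simp [hQdef, Matrix.transpose_mul, Matrix.mul_assoc]
      _ = 1 := by rw [h1, Matrix.mul_one, hR1]
  have hdet : Q.det = 1 := by
    rw [hQdef, Matrix.det_mul, Matrix.det_transpose, hR2, hRc2, mul_one]
  have hQQt : Q * Qᵀ = 1 := mul_eq_one_comm.mp hQ
  have hadj : Q.adjugate = Qᵀ := by
    calc Q.adjugate = (Qᵀ * Q) * Q.adjugate := by rw [hQ, one_mul]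
      _ = Qᵀ * (Q * Q.adjugate) := Matrix.mul_assoc _ _ _
      _ = Qᵀ := by rw [Matrix.mul_adjugate, hdet, one_smul, Matrix.mul_one]
  -- entrywise orthonormality of columns
  have he : ∀ i j, (Qᵀ * Q) i j = (1 : Matrix (Fin 3) (Fin 3) ℝ) i j := fun i j => by
    rw [hQ]
  have h00 := he 0 0; have h11 := he 1 1; have h22 := he 2 2
  simp [Matrix.mul_apply, Fin.sum_univ_three, Matrix.one_apply] at h00 h11 h22
  -- diagonal cofactor identities
  have ha : ∀ i j, Q.adjugate i j = Qᵀ i j := fun i j => by rw [hadj]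
  have a0 := ha 0 0; have a1 := ha 1 1; have a2 := ha 2 2
  rw [Matrix.adjugate_fin_three] at a0 a1 a2
  simp [Matrix.transpose_apply] at a0 a1 a2
  -- reduce the goal to a polynomial inequality
  have hdnn : (eR R Rc) ⬝ᵥ (eR R Rc) ≥ 0 :=
    Finset.sum_nonneg fun i _ => mul_self_nonneg _
  have hsq : enorm3 (eR R Rc) ^ 2 = (eR R Rc) ⬝ᵥ (eR R Rc) :=
    Real.sq_sqrt hdnn
  rw [hsq]
  simp only [Psi, eR, vee, dotProduct, Fin.sum_univ_three, Matrix.trace,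
    Matrix.diag, Matrix.sub_apply, Pi.smul_apply, smul_eq_mul,
    Matrix.one_apply, ← hQdef, Matrix.transpose_apply, if_true]
  have hT : Rᵀ * Rc = Qᵀ := by
    rw [hQdef, Matrix.transpose_mul, Matrix.transpose_transpose]
  have hQt : ∀ i j, (Rᵀ * Rc) i j = Q j i := fun i j => by rw [hT]; rfl
  rw [hQt 2 1, hQt 0 2, hQt 1 0]
  simp only [Matrix.cons_val_zero, Matrix.cons_val_one, Matrix.head_cons,
    Matrix.cons_val_two, Matrix.tail_cons, Fin.sum_univ_three]
  nlinarith [sq_nonneg (Q 0 0 + Q 1 1 + Q 2 2 - 3), sq_nonneg (Q 2 1 - Q 1 2),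
    sq_nonneg (Q 0 2 - Q 2 0), sq_nonneg (Q 1 0 - Q 0 1)]
end
end

section
/- Let ψ be a constant with 0 < ψ < 2, and let R, R_c ∈ SO(3) satisfy Ψ(R, R_c) ≤ ψ. Then Ψ(R, R_c) ≤ (1/(2 − ψ))·‖e_R‖², where e_R = (1/2)(R_cᵀR − RᵀR_c)^∨. -/
open Matrix

noncomputable section

/-- The Euclidean norm on `ℝ³`. -/
def enorm (v : Fin 3 → ℝ) : ℝ := Real.sqrt (v ⬝ᵥ v)

lemma so3_core (Q : Matrix (Fin 3) (Fin 3) ℝ) (h1 : Qᵀ * Q = 1) (h2 : Q.det = 1) :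
    ((Q 2 1 - Q 1 2) ^ 2 + (Q 0 2 - Q 2 0) ^ 2 + (Q 1 0 - Q 0 1) ^ 2) / 4
      = ((3 - (Q 0 0 + Q 1 1 + Q 2 2)) / 2)
        * (2 - (3 - (Q 0 0 + Q 1 1 + Q 2 2)) / 2) := by
  have hQQt : Q * Qᵀ = 1 := mul_eq_one_comm.mp h1
  have hadj : Q.adjugate = Qᵀ := by
    have h := Matrix.adjugate_mul Q
    rw [h2, one_smul] at h
    calc Q.adjugate = Q.adjugate * (Q * Qᵀ) := by rw [hQQt, Matrix.mul_one]
      _ = (Q.adjugate * Q) * Qᵀ := (Matrix.mul_assoc _ _ _).symm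
      _ = Qᵀ := by rw [h, Matrix.one_mul]
  have h0 := congrFun (congrFun h1 0) 0
  have hc1 := congrFun (congrFun h1 1) 1
  have hc2 := congrFun (congrFun h1 2) 2
  simp [Matrix.mul_apply, Fin.sum_univ_three, Matrix.transpose_apply,
    Matrix.one_apply] at h0 hc1 hc2
  have hA : ∀ i j : Fin 3, Q.adjugate i j = Q j i := by
    intro i j; rw [hadj]; rfl
  have m0 : Q 1 1 * Q 2 2 - Q 1 2 * Q 2 1 = Q 0 0 := by
    have h := hA 0 0; rwa [Matrix.adjugate_fin_three] at h
  have m1 : Q 0 0 * Q 2 2 - Q 0 2 * Q 2 0 = Q 1 1 := by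
    have h := hA 1 1; rwa [Matrix.adjugate_fin_three] at h
  have m2 : Q 0 0 * Q 1 1 - Q 0 1 * Q 1 0 = Q 2 2 := by
    have h := hA 2 2; rwa [Matrix.adjugate_fin_three] at h
  linear_combination (h0 + hc1 + hc2) / 4 + (m0 + m1 + m2) / 2

theorem psi_le_inv_two_sub_psi_norm_eR_sq
    (ψ : ℝ) (hψ0 : 0 < ψ) (hψ2 : ψ < 2)
    (R Rc : Matrix (Fin 3) (Fin 3) ℝ) (hR : SO3 R) (hRc : SO3 Rc)
    (hPsi : Psi R Rc ≤ ψ) :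
    Psi R Rc ≤ (1 / (2 - ψ)) * _root_.enorm (eR R Rc) ^ 2 := by
  have hRcRct : Rc * Rcᵀ = 1 := mul_eq_one_comm.mp hRc.1
  have hQtQ : (Rcᵀ * R)ᵀ * (Rcᵀ * R) = 1 := by
    have h : (Rcᵀ * R)ᵀ * (Rcᵀ * R) = Rᵀ * (Rc * Rcᵀ) * R := by
      rw [Matrix.transpose_mul, Matrix.transpose_transpose, Matrix.mul_assoc,
        Matrix.mul_assoc, Matrix.mul_assoc]
    rw [h, hRcRct, Matrix.mul_one, hR.1]
  have hdet : (Rcᵀ * R).det = 1 := by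
    rw [Matrix.det_mul, Matrix.det_transpose, hR.2, hRc.2, mul_one]
  have htr : Rᵀ * Rc = (Rcᵀ * R)ᵀ := by
    rw [Matrix.transpose_mul, Matrix.transpose_transpose]
  have hPsiQ : Psi R Rc
      = (3 - ((Rcᵀ*R) 0 0 + (Rcᵀ*R) 1 1 + (Rcᵀ*R) 2 2)) / 2 := by
    simp [Psi, Matrix.trace, Matrix.diag, Fin.sum_univ_three]
    ring
  have esub : ∀ i j : Fin 3, (Rcᵀ * R - Rᵀ * Rc) i j = (Rcᵀ*R) i j - (Rcᵀ*R) j i := by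
    intro i j
    rw [Matrix.sub_apply, htr, Matrix.transpose_apply]
  have hd : eR R Rc ⬝ᵥ eR R Rc =
      (((Rcᵀ*R) 2 1 - (Rcᵀ*R) 1 2)^2 + ((Rcᵀ*R) 0 2 - (Rcᵀ*R) 2 0)^2
        + ((Rcᵀ*R) 1 0 - (Rcᵀ*R) 0 1)^2) / 4 := by
    simp [eR, vee, dotProduct, Fin.sum_univ_three, esub]
    ring
  have hne : _root_.enorm (eR R Rc) ^ 2 = eR R Rc ⬝ᵥ eR R Rc := by
    rw [_root_.enorm, Real.sq_sqrt]
    rw [hd]; positivity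
  have hkey : _root_.enorm (eR R Rc) ^ 2 = Psi R Rc * (2 - Psi R Rc) := by
    rw [hne, hd, hPsiQ]
    exact so3_core (Rcᵀ * R) hQtQ hdet
  have hsq : (0:ℝ) ≤ Psi R Rc * (2 - Psi R Rc) := by
    rw [← hkey]; positivity
  have hp0 : 0 ≤ Psi R Rc := by nlinarith
  rw [hkey, div_mul_eq_mul_div, le_div_iff₀ (by linarith)]
  nlinarith [mul_nonneg hp0 (sub_nonneg.2 hPsi)]
end
end

section
/- For any Q ∈ SO(3) and any unit vector v ∈ ℝ³, one has v·(Qv) ≥ (tr Q − 1)/2. Equivalently, for R, R_c ∈ SO(3), e₃·(R_cᵀR e₃) ≥ 1 − Ψ(R, R_c); in particular, if Ψ(R, R_c) < 1 then e₃·(R_cᵀR e₃) > 0. -/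
open Matrix

noncomputable section

/-- The Euclidean norm on `ℝ³`. -/
def enorm' (v : Fin 3 → ℝ) : ℝ := Real.sqrt (v ⬝ᵥ v)

/-- `e₃ = (0,0,1)ᵀ`. -/
def e3 : Fin 3 → ℝ := ![0, 0, 1]

private lemma aux1 (a b P : ℝ) (ha : 0 < a) (h : 0 ≤ a * (2 * P - b)) : b / 2 ≤ P := by
  nlinarith

set_option maxHeartbeats 1000000 in
theorem dot_rotation_ge_trace
    : (∀ Q : Matrix (Fin 3) (Fin 3) ℝ, SO3 Q → ∀ v : Fin 3 → ℝ, enorm' v = 1 →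
        (Matrix.trace Q - 1) / 2 ≤ v ⬝ᵥ Q.mulVec v) ∧
      (∀ R Rc : Matrix (Fin 3) (Fin 3) ℝ, SO3 R → SO3 Rc →
        1 - Psi R Rc ≤ e3 ⬝ᵥ (Rcᵀ * R).mulVec e3) ∧
      (∀ R Rc : Matrix (Fin 3) (Fin 3) ℝ, SO3 R → SO3 Rc → Psi R Rc < 1 →
        0 < e3 ⬝ᵥ (Rcᵀ * R).mulVec e3) := by
  have main : ∀ Q : Matrix (Fin 3) (Fin 3) ℝ, SO3 Q → ∀ v : Fin 3 → ℝ, enorm' v = 1 →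
      (Matrix.trace Q - 1) / 2 ≤ v ⬝ᵥ Q.mulVec v := by
    rintro Q ⟨horth, hdet⟩ v hv
    have hrow : Q * Qᵀ = 1 := mul_eq_one_comm.mp horth
    have hadj : Q.adjugate = Qᵀ := by
      have h1 : Q * Q.adjugate = 1 := by rw [Matrix.mul_adjugate, hdet, one_smul]
      calc Q.adjugate = (Qᵀ * Q) * Q.adjugate := by rw [horth, one_mul]
        _ = Qᵀ * (Q * Q.adjugate) := by rw [Matrix.mul_assoc]
        _ = Qᵀ := by rw [h1, mul_one]
    unfold enorm' at hv
    have hv' : v 0 * v 0 + v 1 * v 1 + v 2 * v 2 = 1 := by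
      have h := Real.sqrt_eq_one.mp hv
      simpa [dotProduct, Fin.sum_univ_three] using h
    have hA := fun j k => congrFun (congrFun horth j) k
    simp only [Matrix.mul_apply, Matrix.transpose_apply, Fin.sum_univ_three] at hA
    have hA00 : Q 0 0 * Q 0 0 + Q 1 0 * Q 1 0 + Q 2 0 * Q 2 0 = 1 := by
      simpa [Matrix.one_apply] using hA 0 0
    have hA01 : Q 0 0 * Q 0 1 + Q 1 0 * Q 1 1 + Q 2 0 * Q 2 1 = 0 := by
      simpa [Matrix.one_apply] using hA 0 1
    have hA02 : Q 0 0 * Q 0 2 + Q 1 0 * Q 1 2 + Q 2 0 * Q 2 2 = 0 := by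
      simpa [Matrix.one_apply] using hA 0 2
    have hA11 : Q 0 1 * Q 0 1 + Q 1 1 * Q 1 1 + Q 2 1 * Q 2 1 = 1 := by
      simpa [Matrix.one_apply] using hA 1 1
    have hA12 : Q 0 1 * Q 0 2 + Q 1 1 * Q 1 2 + Q 2 1 * Q 2 2 = 0 := by
      simpa [Matrix.one_apply] using hA 1 2
    have hA22 : Q 0 2 * Q 0 2 + Q 1 2 * Q 1 2 + Q 2 2 * Q 2 2 = 1 := by
      simpa [Matrix.one_apply] using hA 2 2
    have hB := fun i k => congrFun (congrFun hrow i) k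
    simp only [Matrix.mul_apply, Matrix.transpose_apply, Fin.sum_univ_three] at hB
    have hB00 : Q 0 0 * Q 0 0 + Q 0 1 * Q 0 1 + Q 0 2 * Q 0 2 = 1 := by
      simpa [Matrix.one_apply] using hB 0 0
    have hB01 : Q 0 0 * Q 1 0 + Q 0 1 * Q 1 1 + Q 0 2 * Q 1 2 = 0 := by
      simpa [Matrix.one_apply] using hB 0 1
    have hB02 : Q 0 0 * Q 2 0 + Q 0 1 * Q 2 1 + Q 0 2 * Q 2 2 = 0 := by
      simpa [Matrix.one_apply] using hB 0 2
    have hB11 : Q 1 0 * Q 1 0 + Q 1 1 * Q 1 1 + Q 1 2 * Q 1 2 = 1 := by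
      simpa [Matrix.one_apply] using hB 1 1
    have hB12 : Q 1 0 * Q 2 0 + Q 1 1 * Q 2 1 + Q 1 2 * Q 2 2 = 0 := by
      simpa [Matrix.one_apply] using hB 1 2
    rw [Matrix.adjugate_fin_three] at hadj
    have hC00 : Q 0 0 = Q 1 1 * Q 2 2 - Q 1 2 * Q 2 1 := by
      have h := congrFun (congrFun hadj 0) 0; simp at h; linear_combination -h
    have hC01 : Q 0 1 = -(Q 1 0 * Q 2 2) + Q 1 2 * Q 2 0 := by
      have h := congrFun (congrFun hadj 1) 0; simp at h; linear_combination -h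
    have hC02 : Q 0 2 = Q 1 0 * Q 2 1 - Q 1 1 * Q 2 0 := by
      have h := congrFun (congrFun hadj 2) 0; simp at h; linear_combination -h
    have hC10 : Q 1 0 = -(Q 0 1 * Q 2 2) + Q 0 2 * Q 2 1 := by
      have h := congrFun (congrFun hadj 0) 1; simp at h; linear_combination -h
    have hC11 : Q 1 1 = Q 0 0 * Q 2 2 - Q 0 2 * Q 2 0 := by
      have h := congrFun (congrFun hadj 1) 1; simp at h; linear_combination -h
    have hC12 : Q 1 2 = -(Q 0 0 * Q 2 1) + Q 0 1 * Q 2 0 := by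
      have h := congrFun (congrFun hadj 2) 1; simp at h; linear_combination -h
    have hC20 : Q 2 0 = Q 0 1 * Q 1 2 - Q 0 2 * Q 1 1 := by
      have h := congrFun (congrFun hadj 0) 2; simp at h; linear_combination -h
    have hC21 : Q 2 1 = -(Q 0 0 * Q 1 2) + Q 0 2 * Q 1 0 := by
      have h := congrFun (congrFun hadj 1) 2; simp at h; linear_combination -h
    have hC22 : Q 2 2 = Q 0 0 * Q 1 1 - Q 0 1 * Q 1 0 := by
      have h := congrFun (congrFun hadj 2) 2; simp at h; linear_combination -h
    have hgoal : v ⬝ᵥ Q.mulVec v =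
        v 0 * (Q 0 0 * v 0 + Q 0 1 * v 1 + Q 0 2 * v 2) +
        v 1 * (Q 1 0 * v 0 + Q 1 1 * v 1 + Q 1 2 * v 2) +
        v 2 * (Q 2 0 * v 0 + Q 2 1 * v 1 + Q 2 2 * v 2) := by
      simp [dotProduct, Matrix.mulVec, Fin.sum_univ_three]
    rw [Matrix.trace_fin_three, hgoal]
    rcases le_or_gt (1 + (Q 0 0 + Q 1 1 + Q 2 2)) 0 with h | h
    · have hQv : (Q 0 0 * v 0 + Q 0 1 * v 1 + Q 0 2 * v 2) ^ 2 +
          (Q 1 0 * v 0 + Q 1 1 * v 1 + Q 1 2 * v 2) ^ 2 +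
          (Q 2 0 * v 0 + Q 2 1 * v 1 + Q 2 2 * v 2) ^ 2 = 1 := by
        linear_combination (v 0 * v 0) * hA00 + (v 1 * v 1) * hA11 + (v 2 * v 2) * hA22 +
          (2 * v 0 * v 1) * hA01 + (2 * v 0 * v 2) * hA02 + (2 * v 1 * v 2) * hA12 + hv'
      have e1 : (0:ℝ) ≤ (v 0 + (Q 0 0 * v 0 + Q 0 1 * v 1 + Q 0 2 * v 2)) ^ 2 +
          (v 1 + (Q 1 0 * v 0 + Q 1 1 * v 1 + Q 1 2 * v 2)) ^ 2 +
          (v 2 + (Q 2 0 * v 0 + Q 2 1 * v 1 + Q 2 2 * v 2)) ^ 2 := by positivity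
      have e2 : (v 0 + (Q 0 0 * v 0 + Q 0 1 * v 1 + Q 0 2 * v 2)) ^ 2 +
          (v 1 + (Q 1 0 * v 0 + Q 1 1 * v 1 + Q 1 2 * v 2)) ^ 2 +
          (v 2 + (Q 2 0 * v 0 + Q 2 1 * v 1 + Q 2 2 * v 2)) ^ 2 =
          (v 0 * v 0 + v 1 * v 1 + v 2 * v 2) +
          2 * (v 0 * (Q 0 0 * v 0 + Q 0 1 * v 1 + Q 0 2 * v 2) +
            v 1 * (Q 1 0 * v 0 + Q 1 1 * v 1 + Q 1 2 * v 2) +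
            v 2 * (Q 2 0 * v 0 + Q 2 1 * v 1 + Q 2 2 * v 2)) +
          ((Q 0 0 * v 0 + Q 0 1 * v 1 + Q 0 2 * v 2) ^ 2 +
           (Q 1 0 * v 0 + Q 1 1 * v 1 + Q 1 2 * v 2) ^ 2 +
           (Q 2 0 * v 0 + Q 2 1 * v 1 + Q 2 2 * v 2) ^ 2) := by ring
      linarith [e1, e2, hQv, hv', h]
    · have key : 2 * (1 + (Q 0 0 + Q 1 1 + Q 2 2)) *
          (v 0 * (Q 0 0 * v 0 + Q 0 1 * v 1 + Q 0 2 * v 2) +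
           v 1 * (Q 1 0 * v 0 + Q 1 1 * v 1 + Q 1 2 * v 2) +
           v 2 * (Q 2 0 * v 0 + Q 2 1 * v 1 + Q 2 2 * v 2)) -
          (1 + (Q 0 0 + Q 1 1 + Q 2 2)) * ((Q 0 0 + Q 1 1 + Q 2 2) - 1) *
          (v 0 * v 0 + v 1 * v 1 + v 2 * v 2) =
          ((Q 2 1 - Q 1 2) * v 0 + (Q 0 2 - Q 2 0) * v 1 + (Q 1 0 - Q 0 1) * v 2) ^ 2 := by
        linear_combination (-(v 1 * v 1)) * hA00 + (2 * v 0 * v 1) * hA01 +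
          (2 * v 0 * v 2) * hA02 + (-(v 0 * v 0)) * hA11 + (2 * v 1 * v 2) * hA12 +
          (v 2 * v 2 - v 0 * v 0 - v 1 * v 1) * hA22 + (v 0 * v 0 - v 2 * v 2) * hB00 +
          (2 * v 0 * v 1) * hB01 + (2 * v 0 * v 2) * hB02 + (v 1 * v 1 - v 2 * v 2) * hB11 +
          (2 * v 1 * v 2) * hB12 + (2 * v 0 * v 0) * hC00 + (2 * v 0 * v 1) * hC01 +
          (2 * v 0 * v 2) * hC02 + (2 * v 0 * v 1) * hC10 + (2 * v 1 * v 1) * hC11 +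
          (2 * v 1 * v 2) * hC12 + (2 * v 0 * v 2) * hC20 + (2 * v 1 * v 2) * hC21 +
          (2 * v 2 * v 2) * hC22
      have key' : (1 + (Q 0 0 + Q 1 1 + Q 2 2)) *
          (2 * (v 0 * (Q 0 0 * v 0 + Q 0 1 * v 1 + Q 0 2 * v 2) +
            v 1 * (Q 1 0 * v 0 + Q 1 1 * v 1 + Q 1 2 * v 2) +
            v 2 * (Q 2 0 * v 0 + Q 2 1 * v 1 + Q 2 2 * v 2)) -
            (Q 0 0 + Q 1 1 + Q 2 2 - 1)) =
          ((Q 2 1 - Q 1 2) * v 0 + (Q 0 2 - Q 2 0) * v 1 + (Q 1 0 - Q 0 1) * v 2) ^ 2 := by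
        linear_combination key +
          ((1 + (Q 0 0 + Q 1 1 + Q 2 2)) * ((Q 0 0 + Q 1 1 + Q 2 2) - 1)) * hv'
      have h4 : (0:ℝ) ≤ (1 + (Q 0 0 + Q 1 1 + Q 2 2)) *
          (2 * (v 0 * (Q 0 0 * v 0 + Q 0 1 * v 1 + Q 0 2 * v 2) +
            v 1 * (Q 1 0 * v 0 + Q 1 1 * v 1 + Q 1 2 * v 2) +
            v 2 * (Q 2 0 * v 0 + Q 2 1 * v 1 + Q 2 2 * v 2)) -
            (Q 0 0 + Q 1 1 + Q 2 2 - 1)) := by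
        rw [key']; positivity
      exact aux1 _ _ _ h h4
  have part2 : ∀ R Rc : Matrix (Fin 3) (Fin 3) ℝ, SO3 R → SO3 Rc →
      1 - Psi R Rc ≤ e3 ⬝ᵥ (Rcᵀ * R).mulVec e3 := by
    intro R Rc hR hRc
    obtain ⟨h1, d1⟩ := hR; obtain ⟨h2, d2⟩ := hRc
    have h2' : Rc * Rcᵀ = 1 := mul_eq_one_comm.mp h2
    have hso : SO3 (Rcᵀ * R) := by
      constructor
      · rw [Matrix.transpose_mul, Matrix.transpose_transpose, Matrix.mul_assoc,
          ← Matrix.mul_assoc Rc Rcᵀ R, h2', one_mul, h1]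
      · rw [Matrix.det_mul, Matrix.det_transpose, d1, d2, one_mul]
    have he : enorm' e3 = 1 := by
      simp [enorm', e3, dotProduct, Fin.sum_univ_three]
    have h := main _ hso e3 he
    have hPsi : Psi R Rc = (3 - Matrix.trace (Rcᵀ * R)) / 2 := by
      unfold Psi
      rw [Matrix.trace_sub, Matrix.trace_one]
      norm_num
      ring
    linarith
  exact ⟨main, part2, fun R Rc hR hRc hlt =>
    lt_of_lt_of_le (by linarith) (part2 R Rc hR hRc)⟩
end
end

section
/- Let R, R_c ∈ SO(3) satisfy Ψ(R, R_c) < 1. Then ‖(e₃·(R_cᵀR e₃))·(R e₃) − R_c e₃‖ ≤ ‖e_R‖, where e_R = (1/2)(R_cᵀR − RᵀR_c)^∨. (The left-hand side is the sine of the angle between the third body-fixed axes R e₃ and R_c e₃, and the right-hand side is the sine of the eigen-axis rotation angle between R and R_c.) -/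
open Matrix

noncomputable section

set_option maxHeartbeats 1000000

lemma key (a b c d e f g h i : ℝ)
  (r0 : a^2+b^2+c^2=1) (r1 : d^2+e^2+f^2=1)
  (c0 : a^2+d^2+g^2=1) (c1 : b^2+e^2+h^2=1) (c2 : c^2+f^2+i^2=1)
  (hi : i = a*e - b*d) (he : e = a*i - c*g) (ha : a = e*i - f*h)
  (htr : 1 < a+e+i) :
  4*(1-i^2) ≤ (f-h)^2 + (c-g)^2 + (b-d)^2 := by
  have hD : (d-b)^2 = (1+a+e+i)*(1+i-a-e) := by linear_combination r0 + r1 - c2 - 2*hi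
  have hB : 0 ≤ 1+i-a-e := by nlinarith [sq_nonneg (d-b), htr]
  have hA : (f-h)^2+(c-g)^2+(b-d)^2 = (3-(a+e+i))*(1+(a+e+i)) := by
    linear_combination c0 + c1 + c2 - 2*ha - 2*he - 2*hi
  nlinarith [hA, hB, mul_nonneg hB (by linarith : (0:ℝ) ≤ a+e+i-1), sq_nonneg (1+i-a-e)]

theorem thrust_direction_error_le_eR
    (R Rc : Matrix (Fin 3) (Fin 3) ℝ) (hR : SO3 R) (hRc : SO3 Rc)
    (hPsi : Psi R Rc < 1) :
    enorm3 ((e3 ⬝ᵥ (Rcᵀ * R).mulVec e3) • R.mulVec e3 - Rc.mulVec e3)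
      ≤ enorm3 (eR R Rc) := by
  obtain ⟨hR1, hRd⟩ := hR
  obtain ⟨hRc1, hRcd⟩ := hRc
  set Q : Matrix (Fin 3) (Fin 3) ℝ := Rcᵀ * R with hQ
  -- Q is in SO(3)
  have hRcRcT : Rc * Rcᵀ = 1 := mul_eq_one_comm.mp hRc1
  have hQ1 : Qᵀ * Q = 1 := by
    rw [hQ, transpose_mul, transpose_transpose]
    rw [Matrix.mul_assoc, ← Matrix.mul_assoc Rc, hRcRcT, Matrix.one_mul, hR1]
  have hQd : Q.det = 1 := by
    rw [hQ, det_mul, det_transpose, hRcd, hRd, one_mul]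
  have hQQT : Q * Qᵀ = 1 := mul_eq_one_comm.mp hQ1
  have hadj : Q.adjugate = Qᵀ := by
    have h2 : Q * Q.adjugate = 1 := by rw [Matrix.mul_adjugate, hQd, one_smul]
    calc Q.adjugate = (Qᵀ * Q) * Q.adjugate := by rw [hQ1, Matrix.one_mul]
      _ = Qᵀ * (Q * Q.adjugate) := by rw [Matrix.mul_assoc]
      _ = Qᵀ := by rw [h2, Matrix.mul_one]
  -- entrywise cofactor identities
  have hadj' := hadj
  rw [adjugate_fin_three] at hadj'
  have hi : Q 2 2 = Q 0 0 * Q 1 1 - Q 0 1 * Q 1 0 := by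
    have := congrFun (congrFun hadj' 2) 2
    simp [transpose_apply] at this; linarith
  have he : Q 1 1 = Q 0 0 * Q 2 2 - Q 0 2 * Q 2 0 := by
    have := congrFun (congrFun hadj' 1) 1
    simp [transpose_apply] at this; linarith
  have ha : Q 0 0 = Q 1 1 * Q 2 2 - Q 1 2 * Q 2 1 := by
    have := congrFun (congrFun hadj' 0) 0
    simp [transpose_apply] at this; linarith
  -- orthonormality entry equations
  have col : ∀ j k : Fin 3, Q 0 j * Q 0 k + Q 1 j * Q 1 k + Q 2 j * Q 2 k = if j = k then 1 else 0 := by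
    intro j k
    have := congrFun (congrFun hQ1 j) k
    simpa [Matrix.mul_apply, Fin.sum_univ_three, transpose_apply, Matrix.one_apply] using this
  have row : ∀ j k : Fin 3, Q j 0 * Q k 0 + Q j 1 * Q k 1 + Q j 2 * Q k 2 = if j = k then 1 else 0 := by
    intro j k
    have := congrFun (congrFun hQQT j) k
    simpa [Matrix.mul_apply, Fin.sum_univ_three, transpose_apply, Matrix.one_apply] using this
  -- trace condition
  have htr : 1 < Q 0 0 + Q 1 1 + Q 2 2 := by
    have h1 : Matrix.trace ((1 : Matrix (Fin 3) (Fin 3) ℝ) - Q) < 2 := by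
      unfold Psi at hPsi; rw [← hQ] at hPsi; linarith
    rw [Matrix.trace_sub, Matrix.trace_one, trace_fin_three] at h1
    simp at h1; linarith
  -- the key inequality
  have hkey := key (Q 0 0) (Q 0 1) (Q 0 2) (Q 1 0) (Q 1 1) (Q 1 2) (Q 2 0) (Q 2 1) (Q 2 2)
    (by have := row 0 0; simp at this; linarith [this]; )
    (by have := row 1 1; simp at this; nlinarith [this])
    (by have := col 0 0; simp at this; nlinarith [this])
    (by have := col 1 1; simp at this; nlinarith [this])
    (by have := col 2 2; simp at this; nlinarith [this])
    (by linarith [hi]) (by linarith [he]) (by linarith [ha]) htr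
  -- compute both sides
  have hq : e3 ⬝ᵥ Q.mulVec e3 = Q 2 2 := by
    simp [e3, dotProduct, Matrix.mulVec, Fin.sum_univ_three]
  -- relations between R, Rc entries and Q
  have hRR := congrFun (congrFun hR1 2) 2
  simp [Matrix.mul_apply, Fin.sum_univ_three, transpose_apply, Matrix.one_apply] at hRR
  have hRcRc := congrFun (congrFun hRc1 2) 2
  simp [Matrix.mul_apply, Fin.sum_univ_three, transpose_apply, Matrix.one_apply] at hRcRc
  have hQ22 : Q 2 2 = Rc 0 2 * R 0 2 + Rc 1 2 * R 1 2 + Rc 2 2 * R 2 2 := by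
    rw [hQ]; simp [Matrix.mul_apply, Fin.sum_univ_three, transpose_apply]
  -- LHS squared
  have hLHS : (((e3 ⬝ᵥ Q.mulVec e3) • R.mulVec e3 - Rc.mulVec e3) ⬝ᵥ
      ((e3 ⬝ᵥ Q.mulVec e3) • R.mulVec e3 - Rc.mulVec e3)) = 1 - (Q 2 2)^2 := by
    rw [hq]
    simp only [dotProduct, Fin.sum_univ_three, Pi.sub_apply, Pi.smul_apply,
      Matrix.mulVec, dotProduct, e3, smul_eq_mul]
    simp [Fin.sum_univ_three]
    linear_combination (Q 2 2)^2*hRR + hRcRc + 2*(Q 2 2)*hQ22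
  -- RHS squared
  have hRHS : (eR R Rc ⬝ᵥ eR R Rc) =
      (1/4) * ((Q 1 2 - Q 2 1)^2 + (Q 0 2 - Q 2 0)^2 + (Q 1 0 - Q 0 1)^2) := by
    have hT : Rᵀ * Rc = Qᵀ := by rw [hQ, transpose_mul, transpose_transpose]
    unfold eR vee
    rw [hT]
    simp [dotProduct, Fin.sum_univ_three, transpose_apply]
    ring
  unfold enorm3
  apply Real.sqrt_le_sqrt
  rw [hLHS, hRHS]
  nlinarith [hkey]
end
end

section
/- Let A ∈ ℝ³ with A ≠ 0, and let R, R_c ∈ SO(3) satisfy R_c e₃ = −A/‖A‖ and e₃·(R_cᵀR e₃) > 0. Define the thrust magnitude f = −A·(R e₃) and the discrepancy vector X = (f/(e₃·(R_cᵀR e₃)))·((e₃·(R_cᵀR e₃))·(R e₃) − R_c e₃). Then f = ‖A‖·(e₃·(R_cᵀR e₃)) and −f·(R e₃) = A − X. -/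
open Matrix

noncomputable section

theorem thrust_decomposition
    (A : Fin 3 → ℝ) (hA : A ≠ 0)
    (R Rc : Matrix (Fin 3) (Fin 3) ℝ) (hR : SO3 R) (hRc : SO3 Rc)
    (hcol : Rc.mulVec e3 = -((enorm3 A)⁻¹ • A))
    (hpos : 0 < e3 ⬝ᵥ (Rcᵀ * R).mulVec e3) :
    -(A ⬝ᵥ R.mulVec e3) = enorm3 A * (e3 ⬝ᵥ (Rcᵀ * R).mulVec e3) ∧
    (-(-(A ⬝ᵥ R.mulVec e3))) • R.mulVec e3 =
      A - ((-(A ⬝ᵥ R.mulVec e3)) / (e3 ⬝ᵥ (Rcᵀ * R).mulVec e3)) •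
            ((e3 ⬝ᵥ (Rcᵀ * R).mulVec e3) • R.mulVec e3 - Rc.mulVec e3) := by
  have hAA : 0 < A ⬝ᵥ A := by
    have hnn : 0 ≤ A ⬝ᵥ A := Finset.sum_nonneg fun j _ => mul_self_nonneg _
    rcases hnn.lt_or_eq with h | h
    · exact h
    · exact absurd (dotProduct_self_eq_zero.mp h.symm) hA
  have hn0 : 0 < enorm3 A := Real.sqrt_pos.mpr hAA
  have hnw : enorm3 A • Rc.mulVec e3 = -A := by
    rw [hcol, smul_neg, smul_smul, mul_inv_cancel₀ hn0.ne', one_smul]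
  have hc : e3 ⬝ᵥ (Rcᵀ * R).mulVec e3 = Rc.mulVec e3 ⬝ᵥ R.mulVec e3 := by
    rw [← Matrix.mulVec_mulVec, Matrix.dotProduct_mulVec, Matrix.vecMul_transpose]
  set c := e3 ⬝ᵥ (Rcᵀ * R).mulVec e3 with hcdef
  have hcne : c ≠ 0 := ne_of_gt hpos
  have h1 : -(A ⬝ᵥ R.mulVec e3) = enorm3 A * c := by
    rw [hc, ← smul_eq_mul, ← smul_dotProduct, hnw, neg_dotProduct]
  refine ⟨h1, ?_⟩
  rw [h1, mul_div_assoc, div_self hcne, mul_one, smul_sub, smul_smul, hnw]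
  module
end
end

section
/- Let A ∈ ℝ³ with A ≠ 0, and let R, R_c ∈ SO(3) satisfy R_c e₃ = −A/‖A‖ and Ψ(R, R_c) ≤ ψ₁ for a constant 0 < ψ₁ < 1. Define f = −A·(R e₃) and X = (f/(e₃·(R_cᵀR e₃)))·((e₃·(R_cᵀR e₃))·(R e₃) − R_c e₃). Then ‖X‖ ≤ ‖A‖·‖e_R‖ ≤ ‖A‖·√(ψ₁(2 − ψ₁)) < ‖A‖, where e_R = (1/2)(R_cᵀR − RᵀR_c)^∨. -/
open Matrix

noncomputable section

private lemma mul_entry3 (M N : Matrix (Fin 3) (Fin 3) ℝ) (i j : Fin 3) :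
    (M * N) i j = M i 0 * N 0 j + M i 1 * N 1 j + M i 2 * N 2 j := by
  simp [Matrix.mul_apply, Fin.sum_univ_three]

private lemma alg_cpos (q00 q01 q10 q11 q20 q21 q22 ψ₁ : ℝ)
    (hr22 : q20*q20 + q21*q21 + q22*q22 = 1)
    (hc00 : q00*q00 + q10*q10 + q20*q20 = 1)
    (hc11 : q01*q01 + q11*q11 + q21*q21 = 1)
    (ha22 : q00*q11 - q01*q10 = q22)
    (hψ1 : ψ₁ < 1)
    (ht : 3 - 2*ψ₁ ≤ q00 + q11 + q22) :
    q00 + q11 + q22 - 1 ≤ 2 * q22 ∧ 0 < q22 := by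
  have hI2 : (1 + q22 - q00 - q11) * (1 + (q00 + q11 + q22)) = (q10 - q01)^2 := by
    linear_combination hr22 - hc00 - hc11 - 2*ha22
  constructor
  · nlinarith [sq_nonneg (q10 - q01), hI2]
  · nlinarith [sq_nonneg (q10 - q01), hI2]

private lemma alg_I1 (q00 q01 q02 q10 q11 q12 q20 q21 q22 : ℝ)
    (hr00 : q00*q00 + q01*q01 + q02*q02 = 1)
    (hr11 : q10*q10 + q11*q11 + q12*q12 = 1)
    (hr22 : q20*q20 + q21*q21 + q22*q22 = 1)
    (ha00 : q11*q22 - q12*q21 = q00)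
    (ha11 : q00*q22 - q02*q20 = q11)
    (ha22 : q00*q11 - q01*q10 = q22) :
    (q21 - q12)^2 + (q02 - q20)^2 + (q10 - q01)^2
      = (3 - (q00 + q11 + q22)) * (1 + (q00 + q11 + q22)) := by
  linear_combination hr00 + hr11 + hr22 + 2*ha00 + 2*ha11 + 2*ha22

private lemma alg_key (q22 t ψ₁ : ℝ)
    (hc2 : t - 1 ≤ 2 * q22) (hψ1 : ψ₁ < 1) (ht : 3 - 2*ψ₁ ≤ t) :
    1 - q22^2 ≤ (3 - t) * (1 + t) / 4 := by
  nlinarith [hc2, ht, hψ1]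

private lemma alg_psi (t ψ₁ : ℝ) (ht : 3 - 2*ψ₁ ≤ t) (hψ1 : ψ₁ < 1) :
    (3 - t) * (1 + t) / 4 ≤ ψ₁ * (2 - ψ₁) := by
  nlinarith [ht, hψ1]

set_option maxHeartbeats 1000000 in
theorem thrust_discrepancy_bound
    (A : Fin 3 → ℝ) (hA : A ≠ 0)
    (R Rc : Matrix (Fin 3) (Fin 3) ℝ) (hR : SO3 R) (hRc : SO3 Rc)
    (hcol : Rc.mulVec e3 = -((_root_.enorm A)⁻¹ • A))
    (ψ₁ : ℝ) (hψ0 : 0 < ψ₁) (hψ1 : ψ₁ < 1)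
    (hPsi : Psi R Rc ≤ ψ₁) :
    _root_.enorm (((-(A ⬝ᵥ R.mulVec e3)) / (e3 ⬝ᵥ (Rcᵀ * R).mulVec e3)) •
            ((e3 ⬝ᵥ (Rcᵀ * R).mulVec e3) • R.mulVec e3 - Rc.mulVec e3))
        ≤ _root_.enorm A * _root_.enorm (eR R Rc) ∧
    _root_.enorm A * _root_.enorm (eR R Rc) ≤ _root_.enorm A * Real.sqrt (ψ₁ * (2 - ψ₁)) ∧
    _root_.enorm A * Real.sqrt (ψ₁ * (2 - ψ₁)) < _root_.enorm A := by
  obtain ⟨hR1, hR2⟩ := hR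
  obtain ⟨hRc1, hRc2⟩ := hRc
  have hRR' : R * Rᵀ = 1 := mul_eq_one_comm.mp hR1
  have hRcRc' : Rc * Rcᵀ = 1 := mul_eq_one_comm.mp hRc1
  have hQtQ : (Rcᵀ * R)ᵀ * (Rcᵀ * R) = 1 := by
    calc (Rcᵀ * R)ᵀ * (Rcᵀ * R) = Rᵀ * ((Rc * Rcᵀ) * R) := by
          rw [Matrix.transpose_mul, Matrix.transpose_transpose]
          noncomm_ring
      _ = 1 := by rw [hRcRc', one_mul, hR1]
  have hQQt : (Rcᵀ * R) * (Rcᵀ * R)ᵀ = 1 := mul_eq_one_comm.mp hQtQ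
  have hdetQ : (Rcᵀ * R).det = 1 := by
    rw [Matrix.det_mul, Matrix.det_transpose, hR2, hRc2, mul_one]
  have hadj : (Rcᵀ * R).adjugate = (Rcᵀ * R)ᵀ := by
    have h1 : (Rcᵀ * R) * (Rcᵀ * R).adjugate = 1 := by
      rw [Matrix.mul_adjugate, hdetQ, one_smul]
    calc (Rcᵀ * R).adjugate = ((Rcᵀ * R)ᵀ * (Rcᵀ * R)) * (Rcᵀ * R).adjugate := by
          rw [hQtQ, one_mul]
      _ = (Rcᵀ * R)ᵀ * ((Rcᵀ * R) * (Rcᵀ * R).adjugate) := by rw [Matrix.mul_assoc]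
      _ = (Rcᵀ * R)ᵀ := by rw [h1, mul_one]
  have entry : ∀ (M N : Matrix (Fin 3) (Fin 3) ℝ), M = N → ∀ i j, M i j = N i j :=
    fun M N h i j => by rw [h]
  have hc00 : (Rcᵀ*R) 0 0 * (Rcᵀ*R) 0 0 + (Rcᵀ*R) 1 0 * (Rcᵀ*R) 1 0 + (Rcᵀ*R) 2 0 * (Rcᵀ*R) 2 0 = 1 := by
    have := entry _ _ hQtQ 0 0
    rw [mul_entry3] at this
    simpa [Matrix.one_apply] using this
  have hc11 : (Rcᵀ*R) 0 1 * (Rcᵀ*R) 0 1 + (Rcᵀ*R) 1 1 * (Rcᵀ*R) 1 1 + (Rcᵀ*R) 2 1 * (Rcᵀ*R) 2 1 = 1 := by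
    have := entry _ _ hQtQ 1 1
    rw [mul_entry3] at this
    simpa [Matrix.one_apply] using this
  have hr00 : (Rcᵀ*R) 0 0 * (Rcᵀ*R) 0 0 + (Rcᵀ*R) 0 1 * (Rcᵀ*R) 0 1 + (Rcᵀ*R) 0 2 * (Rcᵀ*R) 0 2 = 1 := by
    have := entry _ _ hQQt 0 0
    rw [mul_entry3] at this
    simpa [Matrix.one_apply] using this
  have hr11 : (Rcᵀ*R) 1 0 * (Rcᵀ*R) 1 0 + (Rcᵀ*R) 1 1 * (Rcᵀ*R) 1 1 + (Rcᵀ*R) 1 2 * (Rcᵀ*R) 1 2 = 1 := by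
    have := entry _ _ hQQt 1 1
    rw [mul_entry3] at this
    simpa [Matrix.one_apply] using this
  have hr22 : (Rcᵀ*R) 2 0 * (Rcᵀ*R) 2 0 + (Rcᵀ*R) 2 1 * (Rcᵀ*R) 2 1 + (Rcᵀ*R) 2 2 * (Rcᵀ*R) 2 2 = 1 := by
    have := entry _ _ hQQt 2 2
    rw [mul_entry3] at this
    simpa [Matrix.one_apply] using this
  have hadj' := hadj
  rw [Matrix.adjugate_fin_three] at hadj'
  have ha00 : (Rcᵀ*R) 1 1 * (Rcᵀ*R) 2 2 - (Rcᵀ*R) 1 2 * (Rcᵀ*R) 2 1 = (Rcᵀ*R) 0 0 := by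
    have := entry _ _ hadj' 0 0
    simpa [Matrix.transpose_apply] using this
  have ha11 : (Rcᵀ*R) 0 0 * (Rcᵀ*R) 2 2 - (Rcᵀ*R) 0 2 * (Rcᵀ*R) 2 0 = (Rcᵀ*R) 1 1 := by
    have := entry _ _ hadj' 1 1
    simpa [Matrix.transpose_apply] using this
  have ha22 : (Rcᵀ*R) 0 0 * (Rcᵀ*R) 1 1 - (Rcᵀ*R) 0 1 * (Rcᵀ*R) 1 0 = (Rcᵀ*R) 2 2 := by
    have := entry _ _ hadj' 2 2
    simpa [Matrix.transpose_apply] using this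
  clear hadj hadj' hQQt hdetQ hRR' hRcRc'
  -- Psi in terms of the trace
  have hPsiQ : Psi R Rc = (3 - ((Rcᵀ*R) 0 0 + (Rcᵀ*R) 1 1 + (Rcᵀ*R) 2 2)) / 2 := by
    simp [Psi, Matrix.trace, Matrix.diag, Fin.sum_univ_three, Matrix.sub_apply, Matrix.one_apply]
    ring
  have ht1 : (3 : ℝ) - 2*ψ₁ ≤ (Rcᵀ*R) 0 0 + (Rcᵀ*R) 1 1 + (Rcᵀ*R) 2 2 := by
    rw [hPsiQ] at hPsi; linarith
  obtain ⟨hc2, hcpos⟩ := alg_cpos _ _ _ _ _ _ _ _ hr22 hc00 hc11 ha22 hψ1 ht1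
  have hI1 := alg_I1 _ _ _ _ _ _ _ _ _ hr00 hr11 hr22 ha00 ha11 ha22
  have hT : ∀ i j, (Rᵀ * Rc) i j = (Rcᵀ * R) j i := by
    intro i j
    rw [mul_entry3, mul_entry3]
    simp only [Matrix.transpose_apply]
    ring
  have heRR : eR R Rc ⬝ᵥ eR R Rc =
      (3 - ((Rcᵀ*R) 0 0 + (Rcᵀ*R) 1 1 + (Rcᵀ*R) 2 2)) * (1 + ((Rcᵀ*R) 0 0 + (Rcᵀ*R) 1 1 + (Rcᵀ*R) 2 2)) / 4 := by
    have he0 : eR R Rc 0 = ((Rcᵀ*R) 2 1 - (Rcᵀ*R) 1 2)/2 := by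
      simp [eR, vee, Matrix.sub_apply, hT]
      ring
    have he1 : eR R Rc 1 = ((Rcᵀ*R) 0 2 - (Rcᵀ*R) 2 0)/2 := by
      simp [eR, vee, Matrix.sub_apply, hT]
      ring
    have he2 : eR R Rc 2 = ((Rcᵀ*R) 1 0 - (Rcᵀ*R) 0 1)/2 := by
      simp [eR, vee, Matrix.sub_apply, hT, Matrix.cons_val_two, Matrix.tail_cons,
        Matrix.head_cons]
      ring
    rw [show eR R Rc ⬝ᵥ eR R Rc = eR R Rc 0 * eR R Rc 0 + eR R Rc 1 * eR R Rc 1 +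
        eR R Rc 2 * eR R Rc 2 from by simp [dotProduct, Fin.sum_univ_three],
      he0, he1, he2]
    linear_combination hI1 / 4
  -- dot products
  have hQe3 : e3 ⬝ᵥ (Rcᵀ * R).mulVec e3 = (Rcᵀ*R) 2 2 := by
    simp [Matrix.mulVec, dotProduct, e3, Fin.sum_univ_three]
  have huu : R.mulVec e3 ⬝ᵥ R.mulVec e3 = 1 := by
    have h : R.mulVec e3 ⬝ᵥ R.mulVec e3 = (Rᵀ*R) 2 2 := by
      rw [mul_entry3]
      simp [Matrix.mulVec, dotProduct, e3, Fin.sum_univ_three, Matrix.transpose_apply]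
    rw [h, hR1, Matrix.one_apply_eq]
  have hvv : Rc.mulVec e3 ⬝ᵥ Rc.mulVec e3 = 1 := by
    have h : Rc.mulVec e3 ⬝ᵥ Rc.mulVec e3 = (Rcᵀ*Rc) 2 2 := by
      rw [mul_entry3]
      simp [Matrix.mulVec, dotProduct, e3, Fin.sum_univ_three, Matrix.transpose_apply]
    rw [h, hRc1, Matrix.one_apply_eq]
  have huv : R.mulVec e3 ⬝ᵥ Rc.mulVec e3 = (Rcᵀ*R) 2 2 := by
    rw [mul_entry3]
    simp [Matrix.mulVec, dotProduct, e3, Fin.sum_univ_three, Matrix.transpose_apply]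
    ring
  have hvu : Rc.mulVec e3 ⬝ᵥ R.mulVec e3 = (Rcᵀ*R) 2 2 := by
    rw [dotProduct_comm]; exact huv
  -- facts about A
  have hAAnn : 0 ≤ A ⬝ᵥ A := by
    simp only [dotProduct, Fin.sum_univ_three]
    nlinarith [sq_nonneg (A 0), sq_nonneg (A 1), sq_nonneg (A 2)]
  have hAAne : A ⬝ᵥ A ≠ 0 := fun h => hA (dotProduct_self_eq_zero.mp h)
  have hNpos : 0 < _root_.enorm A := Real.sqrt_pos.mpr (lt_of_le_of_ne hAAnn (Ne.symm hAAne))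
  have hNne : _root_.enorm A ≠ 0 := ne_of_gt hNpos
  have hAA : A ⬝ᵥ A = (_root_.enorm A)^2 := (Real.sq_sqrt hAAnn).symm
  have hAeq : A = (-(_root_.enorm A)) • Rc.mulVec e3 := by
    rw [hcol, smul_neg, neg_smul, neg_neg, smul_smul, mul_inv_cancel₀ hNne, one_smul]
  have hf : -(A ⬝ᵥ R.mulVec e3) = _root_.enorm A * (Rcᵀ*R) 2 2 := by
    conv_lhs => rw [hAeq]
    rw [smul_dotProduct, hvu, smul_eq_mul]; ring
  have heRb : eR R Rc ⬝ᵥ eR R Rc ≤ ψ₁ * (2 - ψ₁) := by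
    rw [heRR]; exact alg_psi _ _ ht1 hψ1
  refine ⟨?_, ?_, ?_⟩
  · -- part 1
    rw [hQe3, hf]
    have hdiv : _root_.enorm A * (Rcᵀ*R) 2 2 / (Rcᵀ*R) 2 2 = _root_.enorm A := by
      field_simp
    rw [hdiv]
    have hXX : (_root_.enorm A • ((Rcᵀ*R) 2 2 • R.mulVec e3 - Rc.mulVec e3)) ⬝ᵥ
        (_root_.enorm A • ((Rcᵀ*R) 2 2 • R.mulVec e3 - Rc.mulVec e3))
        = (_root_.enorm A)^2 * (1 - ((Rcᵀ*R) 2 2)^2) := by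
      simp only [smul_dotProduct, dotProduct_smul, sub_dotProduct,
        dotProduct_sub, smul_eq_mul]
      rw [huu, hvv, huv, hvu]
      ring
    have hkey := alg_key ((Rcᵀ*R) 2 2) ((Rcᵀ*R) 0 0 + (Rcᵀ*R) 1 1 + (Rcᵀ*R) 2 2) ψ₁
      (by linarith [hc2]) hψ1 ht1
    have hmono : (_root_.enorm A)^2 * (1 - ((Rcᵀ*R) 2 2)^2) ≤ (A ⬝ᵥ A) * (eR R Rc ⬝ᵥ eR R Rc) := by
      rw [hAA, heRR]
      exact mul_le_mul_of_nonneg_left hkey (sq_nonneg _)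
    calc _root_.enorm (_root_.enorm A • ((Rcᵀ*R) 2 2 • R.mulVec e3 - Rc.mulVec e3))
        = Real.sqrt ((_root_.enorm A)^2 * (1 - ((Rcᵀ*R) 2 2)^2)) := by rw [_root_.enorm, hXX]
      _ ≤ Real.sqrt ((A ⬝ᵥ A) * (eR R Rc ⬝ᵥ eR R Rc)) := Real.sqrt_le_sqrt hmono
      _ = _root_.enorm A * _root_.enorm (eR R Rc) := by rw [Real.sqrt_mul hAAnn, _root_.enorm, _root_.enorm]
  · -- part 2
    have h := Real.sqrt_le_sqrt heRb
    exact mul_le_mul_of_nonneg_left h (Real.sqrt_nonneg _)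
  · -- part 3
    have h1 : ψ₁ * (2 - ψ₁) < 1 := by nlinarith [sq_nonneg (1 - ψ₁)]
    have h2 : Real.sqrt (ψ₁ * (2 - ψ₁)) < 1 := by
      rw [show (1:ℝ) = Real.sqrt 1 by simp]
      exact Real.sqrt_lt_sqrt (by nlinarith) h1
    calc _root_.enorm A * Real.sqrt (ψ₁ * (2 - ψ₁)) < _root_.enorm A * 1 :=
          mul_lt_mul_of_pos_left h2 hNpos
      _ = _root_.enorm A := mul_one _
end
end

section
/- For any Q ∈ SO(3) and any v ∈ ℝ³, ‖(tr Q)·v − Q v‖ ≤ 2‖v‖; equivalently, the linear map (1/2)(tr(Q)·I₃ − Q) has operator norm at most 1. (This is the algebraic content of the bound ‖ė_R‖ ≤ ‖e_Ω‖ for the attitude error vector.) -/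
open Matrix

noncomputable section

lemma aux_bounds {T : ℝ} (h : 0 ≤ (3 - T) * (1 + T)) : -1 ≤ T ∧ T ≤ 3 :=
  ⟨by nlinarith, by nlinarith⟩

lemma aux_csU (a b c x y z : ℝ) (h : x * x + y * y + z * z = a * a + b * b + c * c) :
    (a * x + b * y + c * z) ^ 2 ≤ (a * a + b * b + c * c) ^ 2 := by
  have key : (a * a + b * b + c * c) ^ 2 - (a * x + b * y + c * z) ^ 2
      = (a * y - b * x) ^ 2 + (a * z - c * x) ^ 2 + (b * z - c * y) ^ 2
        + (a * a + b * b + c * c) * ((a * a + b * b + c * c) - (x * x + y * y + z * z)) := by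
    ring
  have h0 : (a * a + b * b + c * c) - (x * x + y * y + z * z) = 0 := by linarith
  rw [h0, mul_zero, add_zero] at key
  nlinarith [sq_nonneg (a * y - b * x), sq_nonneg (a * z - c * x), sq_nonneg (b * z - c * y)]

/-- Scalar core of the bound. -/
lemma aux_scalar (T U Pp S : ℝ) (hU : 0 ≤ U) (hP : Pp ^ 2 ≤ U ^ 2)
    (h2 : (T + 1) * (2 * Pp + (1 - T) * U) = S ^ 2)
    (h3 : -1 ≤ T) (h3' : T ≤ 3) :
    T ^ 2 * U - 2 * T * Pp + U ≤ 4 * U := by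
  rcases le_total 0 T with hT | hT
  · nlinarith [sq_nonneg S, mul_nonneg hT (sq_nonneg S),
      mul_nonneg (mul_nonneg (by linarith : (0:ℝ) ≤ 3 - T) (by linarith : (0:ℝ) ≤ 1 + T)) hU]
  · have hPle : Pp ≤ U := by nlinarith
    nlinarith [mul_nonneg (mul_nonneg (by linarith : (0:ℝ) ≤ 3 - T) (by linarith : (0:ℝ) ≤ 1 + T)) hU,
      mul_nonneg (by linarith : (0:ℝ) ≤ -T) (by linarith : (0:ℝ) ≤ U - Pp)]

set_option maxHeartbeats 1000000 in
theorem trace_smul_sub_apply_norm_le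
    (Q : Matrix (Fin 3) (Fin 3) ℝ) (hQ : SO3 Q) (v : Fin 3 → ℝ) :
    _root_.enorm (Matrix.trace Q • v - Q.mulVec v) ≤ 2 * _root_.enorm v := by
  obtain ⟨h1, h2⟩ := hQ
  have h3 : Q * Qᵀ = 1 := by rwa [mul_eq_one_comm] at h1
  have hadj : Q.adjugate = Qᵀ := by
    calc Q.adjugate = Q.adjugate * (Q * Qᵀ) := by rw [h3, mul_one]
      _ = (Q.adjugate * Q) * Qᵀ := by rw [mul_assoc]
      _ = Qᵀ := by rw [Matrix.adjugate_mul, h2, one_smul, one_mul]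
  rw [Matrix.adjugate_fin_three] at hadj
  have hce := Matrix.ext_iff.2 h1
  have hre := Matrix.ext_iff.2 h3
  have hae := Matrix.ext_iff.2 hadj
  -- column orthonormality
  have hc00 : Q 0 0 * Q 0 0 + Q 1 0 * Q 1 0 + Q 2 0 * Q 2 0 = 1 := by
    simpa [Matrix.mul_apply, Fin.sum_univ_three, Matrix.one_apply] using hce 0 0
  have hc01 : Q 0 0 * Q 0 1 + Q 1 0 * Q 1 1 + Q 2 0 * Q 2 1 = 0 := by
    simpa [Matrix.mul_apply, Fin.sum_univ_three, Matrix.one_apply] using hce 0 1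
  have hc02 : Q 0 0 * Q 0 2 + Q 1 0 * Q 1 2 + Q 2 0 * Q 2 2 = 0 := by
    simpa [Matrix.mul_apply, Fin.sum_univ_three, Matrix.one_apply] using hce 0 2
  have hc11 : Q 0 1 * Q 0 1 + Q 1 1 * Q 1 1 + Q 2 1 * Q 2 1 = 1 := by
    simpa [Matrix.mul_apply, Fin.sum_univ_three, Matrix.one_apply] using hce 1 1
  have hc12 : Q 0 1 * Q 0 2 + Q 1 1 * Q 1 2 + Q 2 1 * Q 2 2 = 0 := by
    simpa [Matrix.mul_apply, Fin.sum_univ_three, Matrix.one_apply] using hce 1 2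
  have hc22 : Q 0 2 * Q 0 2 + Q 1 2 * Q 1 2 + Q 2 2 * Q 2 2 = 1 := by
    simpa [Matrix.mul_apply, Fin.sum_univ_three, Matrix.one_apply] using hce 2 2
  -- row orthonormality
  have hr00 : Q 0 0 * Q 0 0 + Q 0 1 * Q 0 1 + Q 0 2 * Q 0 2 = 1 := by
    simpa [Matrix.mul_apply, Fin.sum_univ_three, Matrix.one_apply] using hre 0 0
  have hr01 : Q 0 0 * Q 1 0 + Q 0 1 * Q 1 1 + Q 0 2 * Q 1 2 = 0 := by
    simpa [Matrix.mul_apply, Fin.sum_univ_three, Matrix.one_apply] using hre 0 1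
  have hr02 : Q 0 0 * Q 2 0 + Q 0 1 * Q 2 1 + Q 0 2 * Q 2 2 = 0 := by
    simpa [Matrix.mul_apply, Fin.sum_univ_three, Matrix.one_apply] using hre 0 2
  have hr11 : Q 1 0 * Q 1 0 + Q 1 1 * Q 1 1 + Q 1 2 * Q 1 2 = 1 := by
    simpa [Matrix.mul_apply, Fin.sum_univ_three, Matrix.one_apply] using hre 1 1
  have hr12 : Q 1 0 * Q 2 0 + Q 1 1 * Q 2 1 + Q 1 2 * Q 2 2 = 0 := by
    simpa [Matrix.mul_apply, Fin.sum_univ_three, Matrix.one_apply] using hre 1 2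
  have hr22 : Q 2 0 * Q 2 0 + Q 2 1 * Q 2 1 + Q 2 2 * Q 2 2 = 1 := by
    simpa [Matrix.mul_apply, Fin.sum_univ_three, Matrix.one_apply] using hre 2 2
  -- cofactor identities from adjugate Q = Qᵀ
  have ha00 : Q 1 1 * Q 2 2 - Q 1 2 * Q 2 1 = Q 0 0 := by simpa using hae 0 0
  have ha01 : -(Q 0 1 * Q 2 2) + Q 0 2 * Q 2 1 = Q 1 0 := by simpa using hae 0 1
  have ha02 : Q 0 1 * Q 1 2 - Q 0 2 * Q 1 1 = Q 2 0 := by simpa using hae 0 2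
  have ha10 : -(Q 1 0 * Q 2 2) + Q 1 2 * Q 2 0 = Q 0 1 := by simpa using hae 1 0
  have ha11 : Q 0 0 * Q 2 2 - Q 0 2 * Q 2 0 = Q 1 1 := by simpa using hae 1 1
  have ha12 : -(Q 0 0 * Q 1 2) + Q 0 2 * Q 1 0 = Q 2 1 := by simpa using hae 1 2
  have ha20 : Q 1 0 * Q 2 1 - Q 1 1 * Q 2 0 = Q 0 2 := by simpa using hae 2 0
  have ha21 : -(Q 0 0 * Q 2 1) + Q 0 1 * Q 2 0 = Q 1 2 := by simpa using hae 2 1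
  have ha22 : Q 0 0 * Q 1 1 - Q 0 1 * Q 1 0 = Q 2 2 := by simpa using hae 2 2
  have hU : (0:ℝ) ≤ v 0 * v 0 + v 1 * v 1 + v 2 * v 2 := by
    nlinarith [mul_self_nonneg (v 0), mul_self_nonneg (v 1), mul_self_nonneg (v 2)]
  -- key identity F2
  have hF2 : (Q 0 0 + Q 1 1 + Q 2 2 + 1) *
      (2 * (v 0 * (Q 0 0 * v 0 + Q 0 1 * v 1 + Q 0 2 * v 2)
          + v 1 * (Q 1 0 * v 0 + Q 1 1 * v 1 + Q 1 2 * v 2)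
          + v 2 * (Q 2 0 * v 0 + Q 2 1 * v 1 + Q 2 2 * v 2))
        + (1 - (Q 0 0 + Q 1 1 + Q 2 2)) * (v 0 * v 0 + v 1 * v 1 + v 2 * v 2))
      = ((Q 2 1 - Q 1 2) * v 0 + (Q 0 2 - Q 2 0) * v 1 + (Q 1 0 - Q 0 1) * v 2) ^ 2 := by
    linear_combination (v 0 * v 0) * hr00 + (2 * (v 0 * v 1)) * hr01 + (2 * (v 0 * v 2)) * hr02
      + (v 1 * v 1) * hr11 + (2 * (v 1 * v 2)) * hr12 + (v 2 * v 2) * hr22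
      + (v 0 * v 0) * hc00 + (2 * (v 0 * v 1)) * hc01 + (2 * (v 0 * v 2)) * hc02
      + (v 1 * v 1) * hc11 + (2 * (v 1 * v 2)) * hc12 + (v 2 * v 2) * hc22
      - (2 * (v 0 * v 0)) * ha00 - (2 * (v 0 * v 1)) * ha01 - (2 * (v 0 * v 2)) * ha02
      - (2 * (v 1 * v 0)) * ha10 - (2 * (v 1 * v 1)) * ha11 - (2 * (v 1 * v 2)) * ha12
      - (2 * (v 2 * v 0)) * ha20 - (2 * (v 2 * v 1)) * ha21 - (2 * (v 2 * v 2)) * ha22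
      - (v 0 * v 0 + v 1 * v 1 + v 2 * v 2) * (hc00 + hc11 + hc22)
  -- F3: trace bounds
  have hF3 : (3 - (Q 0 0 + Q 1 1 + Q 2 2)) * (1 + (Q 0 0 + Q 1 1 + Q 2 2))
      = (Q 2 1 - Q 1 2) ^ 2 + (Q 0 2 - Q 2 0) ^ 2 + (Q 1 0 - Q 0 1) ^ 2 := by
    linear_combination (-1 : ℝ) * (hc00 + hc11 + hc22) - 2 * (ha00 + ha11 + ha22)
  have hF3' : (0:ℝ) ≤ (3 - (Q 0 0 + Q 1 1 + Q 2 2)) * (1 + (Q 0 0 + Q 1 1 + Q 2 2)) := by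
    rw [hF3]; positivity
  have hT1 : -1 ≤ Q 0 0 + Q 1 1 + Q 2 2 := (aux_bounds hF3').1
  have hT3 : Q 0 0 + Q 1 1 + Q 2 2 ≤ 3 := (aux_bounds hF3').2
  -- F1 : norm preservation
  have hF1 : (Q 0 0 * v 0 + Q 0 1 * v 1 + Q 0 2 * v 2) ^ 2
      + (Q 1 0 * v 0 + Q 1 1 * v 1 + Q 1 2 * v 2) ^ 2
      + (Q 2 0 * v 0 + Q 2 1 * v 1 + Q 2 2 * v 2) ^ 2
      = v 0 * v 0 + v 1 * v 1 + v 2 * v 2 := by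
    linear_combination (v 0 * v 0) * hc00 + (2 * (v 0 * v 1)) * hc01 + (2 * (v 0 * v 2)) * hc02
      + (v 1 * v 1) * hc11 + (2 * (v 1 * v 2)) * hc12 + (v 2 * v 2) * hc22
  -- Cauchy–Schwarz
  have hP : (v 0 * (Q 0 0 * v 0 + Q 0 1 * v 1 + Q 0 2 * v 2)
      + v 1 * (Q 1 0 * v 0 + Q 1 1 * v 1 + Q 1 2 * v 2)
      + v 2 * (Q 2 0 * v 0 + Q 2 1 * v 1 + Q 2 2 * v 2)) ^ 2
      ≤ (v 0 * v 0 + v 1 * v 1 + v 2 * v 2) ^ 2 := by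
    have := aux_csU (v 0) (v 1) (v 2)
      (Q 0 0 * v 0 + Q 0 1 * v 1 + Q 0 2 * v 2)
      (Q 1 0 * v 0 + Q 1 1 * v 1 + Q 1 2 * v 2)
      (Q 2 0 * v 0 + Q 2 1 * v 1 + Q 2 2 * v 2)
      (by linear_combination hF1)
    linarith [this]
  have hmain := aux_scalar (Q 0 0 + Q 1 1 + Q 2 2)
      (v 0 * v 0 + v 1 * v 1 + v 2 * v 2)
      (v 0 * (Q 0 0 * v 0 + Q 0 1 * v 1 + Q 0 2 * v 2)
        + v 1 * (Q 1 0 * v 0 + Q 1 1 * v 1 + Q 1 2 * v 2)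
        + v 2 * (Q 2 0 * v 0 + Q 2 1 * v 1 + Q 2 2 * v 2))
      ((Q 2 1 - Q 1 2) * v 0 + (Q 0 2 - Q 2 0) * v 1 + (Q 1 0 - Q 0 1) * v 2)
      hU hP hF2 hT1 hT3
  -- reduce the goal
  rw [_root_.enorm, _root_.enorm]
  have hle : (Matrix.trace Q • v - Q.mulVec v) ⬝ᵥ (Matrix.trace Q • v - Q.mulVec v)
      ≤ 4 * (v ⬝ᵥ v) := by
    simp only [dotProduct, Matrix.mulVec, Matrix.trace_fin_three, Fin.sum_univ_three,
      Pi.sub_apply, Pi.smul_apply, smul_eq_mul]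
    linarith [hmain, hF1]
  calc Real.sqrt ((Matrix.trace Q • v - Q.mulVec v) ⬝ᵥ (Matrix.trace Q • v - Q.mulVec v))
      ≤ Real.sqrt (4 * (v ⬝ᵥ v)) := Real.sqrt_le_sqrt hle
    _ = 2 * Real.sqrt (v ⬝ᵥ v) := by
        have hd0 : (0:ℝ) ≤ v ⬝ᵥ v := by
          simp only [dotProduct, Fin.sum_univ_three]; positivity
        rw [show (4:ℝ) = 2 ^ 2 by norm_num, Real.sqrt_mul (by positivity) (v ⬝ᵥ v),
          Real.sqrt_sq (by norm_num)]
end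
end

section
/- Let k_z > 0, σ > 0, and Δ ∈ ℝ with |Δ| < k_z σ. Define F(e) = ∫_{Δ/k_z}^{e} (k_z·sat_σ(μ) − Δ) dμ for e ∈ ℝ. Then F(e) ≥ 0 for all e ∈ ℝ, and F(e) = 0 if and only if e = Δ/k_z. -/
open MeasureTheory

noncomputable section

/-- The saturation function `sat_σ : ℝ → [−σ, σ]`. -/
def sat (σ y : ℝ) : ℝ := if y > σ then σ else if y < -σ then -σ else y

lemma sat_eq_maxmin (σ y : ℝ) (hσ : 0 < σ) : sat σ y = max (-σ) (min σ y) := by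
  unfold sat
  split_ifs with h1 h2
  · rw [min_eq_left h1.le, max_eq_right (by linarith)]
  · rw [min_eq_right (by linarith), max_eq_left h2.le]
  · rw [min_eq_right (by linarith), max_eq_right (by linarith)]

theorem integral_term_pos_def
    (kz σ Δ : ℝ) (hkz : 0 < kz) (hσ : 0 < σ) (hΔ : |Δ| < kz * σ) :
    ∀ e : ℝ,
      0 ≤ (∫ μ in (Δ / kz)..e, (kz * sat σ μ - Δ)) ∧
      ((∫ μ in (Δ / kz)..e, (kz * sat σ μ - Δ)) = 0 ↔ e = Δ / kz) := by
  set a := Δ / kz with ha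
  have hak : a * kz = Δ := div_mul_cancel₀ _ hkz.ne'
  have haσ : |a| < σ := by
    rw [abs_div, abs_of_pos hkz, div_lt_iff₀ hkz]
    linarith [hΔ, mul_comm σ kz]
  have ha1 : -σ < a := by cases abs_lt.mp haσ; linarith
  have ha2 : a < σ := by cases abs_lt.mp haσ; linarith
  have hcont : Continuous (fun μ : ℝ => kz * sat σ μ - Δ) := by
    have : (fun μ : ℝ => kz * sat σ μ - Δ)
        = fun μ : ℝ => kz * max (-σ) (min σ μ) - Δ := by
      funext μ; rw [sat_eq_maxmin σ μ hσ]
    rw [this]; fun_prop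
  have hsat_gt : ∀ x : ℝ, a < x → a < sat σ x := by
    intro x hx
    unfold sat
    split_ifs with h1 h2 <;> [exact ha2; linarith; exact hx]
  have hsat_lt : ∀ x : ℝ, x < a → sat σ x < a := by
    intro x hx
    unfold sat
    split_ifs with h1 h2 <;> [linarith; exact ha1; exact hx]
  have key : ∀ e : ℝ, a < e → 0 < ∫ μ in a..e, (kz * sat σ μ - Δ) := by
    intro e he
    apply intervalIntegral.intervalIntegral_pos_of_pos_on
      (hcont.intervalIntegrable a e)
    · intro x hx
      have := hsat_gt x hx.1
      nlinarith
    · exact he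
  have key2 : ∀ e : ℝ, e < a → 0 < ∫ μ in a..e, (kz * sat σ μ - Δ) := by
    intro e he
    rw [intervalIntegral.integral_symm]
    have : (0:ℝ) < ∫ μ in e..a, -(kz * sat σ μ - Δ) := by
      apply intervalIntegral.intervalIntegral_pos_of_pos_on
        ((hcont.neg).intervalIntegrable e a)
      · intro x hx
        have := hsat_lt x hx.2
        show (0:ℝ) < -(kz * sat σ x - Δ)
        nlinarith
      · exact he
    rw [intervalIntegral.integral_neg] at this
    linarith
  intro e
  rcases lt_trichotomy e a with h | h | h
  · have := key2 e h
    exact ⟨this.le, by constructor <;> intro h' <;> [linarith; exact absurd h' h.ne]⟩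
  · subst h
    simp
  · have := key e h
    exact ⟨this.le, by constructor <;> intro h' <;> [linarith; exact absurd h' h.ne']⟩
end
end
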